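/- arXiv:2507.13312 — 4 statements merged into one kernel-verified Lean document; each statement's English description precedes it below -/
import Mathlib

section
/- Let m > 0, k_m > 0 and k_λ > 0 with k_λ < 1/(4m²). Then p = 1 minimizes the total cost C(p) = (2p+1)/(4pm) + (k_m + p·k_λ)·m over p ∈ (0,1]; that is, C(1) ≤ C(p) for all p ∈ (0,1], with strict inequality whenever p < 1. -/
/-!
The cost difference factors as
`C(p) - C(1) = (1 - p) (1 - 4 m² k_λ p) / (4 p m)`.
For `p ∈ (0, 1]` the first factor is nonnegative (positive when `p < 1`), and the threshold
`4 m² k_λ < 1` makes the second factor positive, so `C(p) - C(1) ≥ 0`, strictly when `p < 1`.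
-/

noncomputable def totalCost (m km kl p : ℝ) : ℝ :=
  (2 * p + 1) / (4 * p * m) + (km + p * kl) * m

lemma totalCost_sub_totalCost_one {m p : ℝ} (km kl : ℝ) (hm : m ≠ 0) (hp : p ≠ 0) :
    totalCost m km kl p - totalCost m km kl 1 =
      (1 - p) * (1 - 4 * m ^ 2 * kl * p) / (4 * p * m) := by
  unfold totalCost
  field_simp
  ring

lemma one_sub_mul_pos_of_lt_one {p x : ℝ} (hp : 0 < p) (hp1 : p ≤ 1) (hx : x < 1) :
    0 < 1 - x * p := by
  rw [show 1 - x * p = (1 - x) * p + (1 - p) by ring]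
  exact add_pos_of_pos_of_nonneg (mul_pos (sub_pos.2 hx) hp) (sub_nonneg.2 hp1)

lemma totalCost_one_lt_of_lt {m p : ℝ} (km kl : ℝ) (hm : 0 < m) (hp : 0 < p) (hp1 : p < 1)
    (hthr : 4 * m ^ 2 * kl < 1) :
    totalCost m km kl 1 < totalCost m km kl p := by
  have hdiff := totalCost_sub_totalCost_one km kl hm.ne' hp.ne'
  have : 0 < (1 - p) * (1 - 4 * m ^ 2 * kl * p) / (4 * p * m) :=
    div_pos (mul_pos (sub_pos.2 hp1) (one_sub_mul_pos_of_lt_one hp hp1.le hthr))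
      (by positivity)
  linarith

lemma totalCost_one_le_of_lt {m p : ℝ} (km kl : ℝ) (hm : 0 < m) (hp : 0 < p) (hp1 : p ≤ 1)
    (hthr : 4 * m ^ 2 * kl < 1) :
    totalCost m km kl 1 ≤ totalCost m km kl p := by
  rcases hp1.lt_or_eq with hlt | rfl
  · exact (totalCost_one_lt_of_lt km kl hm hp hlt hthr).le
  · exact le_rfl

theorem always_transmit_optimal_general
    (m km kl : ℝ) (hm : 0 < m)
    (hthr : kl < 1 / (4 * m ^ 2)) :
    ∀ p : ℝ, 0 < p → p ≤ 1 →
      ((2 * (1 : ℝ) + 1) / (4 * 1 * m) + (km + 1 * kl) * m ≤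
        (2 * p + 1) / (4 * p * m) + (km + p * kl) * m) ∧
      (p < 1 →
        (2 * (1 : ℝ) + 1) / (4 * 1 * m) + (km + 1 * kl) * m <
          (2 * p + 1) / (4 * p * m) + (km + p * kl) * m) := by
  have hthr' : 4 * m ^ 2 * kl < 1 := by
    rwa [lt_div_iff₀ (by positivity), mul_comm] at hthr
  intro p hp hp1
  exact ⟨totalCost_one_le_of_lt km kl hm hp hp1 hthr',
    fun hlt => totalCost_one_lt_of_lt km kl hm hp hlt hthr'⟩

/-- Theorem 2 of the paper: if the transmission cost satisfies
`k_λ < 1/(4m²)`, then always transmitting after every measurement (`p = 1`)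
minimizes the total cost `C(p) = (2p+1)/(4pm) + (k_m + p k_λ) m` over `p ∈ (0,1]`,
strictly so for `p < 1`. -/
theorem always_transmit_optimal
    (m km kl : ℝ) (hm : 0 < m) (hkm : 0 < km) (hkl : 0 < kl)
    (hthr : kl < 1 / (4 * m ^ 2)) :
    ∀ p : ℝ, 0 < p → p ≤ 1 →
      ((2 * (1 : ℝ) + 1) / (4 * 1 * m) + (km + 1 * kl) * m ≤
        (2 * p + 1) / (4 * p * m) + (km + p * kl) * m) ∧
      (p < 1 →
        (2 * (1 : ℝ) + 1) / (4 * 1 * m) + (km + 1 * kl) * m <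
          (2 * p + 1) / (4 * p * m) + (km + p * kl) * m) :=
  always_transmit_optimal_general m km kl hm hthr
end

section
/- Let m > 0, η > 0 and k_m > 0 with k_m < 1/(4ηm²), and set k_λ = η·k_m. Then k_λ < 1/(4m²), and p = 1 minimizes the total cost C(p) = (2p+1)/(4pm) + (k_m + p·k_λ)·m over p ∈ (0,1]: C(1) ≤ C(p) for all p ∈ (0,1], with strict inequality whenever p < 1. -/
/-!
Since `C(p) - C(1) = (1 - p)(1 - 4 k_λ m² p) / (4 p m)`, the point `p = 1` is optimal on `(0, 1]`
as soon as `4 k_λ m² p < 1` there, which holds when `k_λ` is below the threshold `1/(4m²)`; with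
`k_λ = η k_m` this threshold is the condition `k_m < 1/(4 η m²)` divided through by `η`.
-/

namespace TransmissionCost

noncomputable def totalCost (m km kl p : ℝ) : ℝ :=
  (2 * p + 1) / (4 * p * m) + (km + p * kl) * m

theorem mul_lt_threshold_of_lt {m η km : ℝ} (hη : 0 < η) (h : km < 1 / (4 * η * m ^ 2)) :
    η * km < 1 / (4 * m ^ 2) := by
  have hdiv : 1 / (4 * η * m ^ 2) = 1 / (4 * m ^ 2) / η := by ring
  rwa [hdiv, lt_div_iff₀' hη] at h

theorem totalCost_sub_totalCost_one {m km kl p : ℝ} (hm : m ≠ 0) (hp : p ≠ 0) :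
    totalCost m km kl p - totalCost m km kl 1 =
      (1 - p) * (1 - 4 * kl * m ^ 2 * p) / (4 * p * m) := by
  unfold totalCost
  field_simp
  ring

theorem one_sub_mul_pos_of_lt_threshold {m kl p : ℝ} (hm : 0 < m) (hkl : kl < 1 / (4 * m ^ 2))
    (hp : 0 < p) (hp1 : p ≤ 1) : 0 < 1 - 4 * kl * m ^ 2 * p := by
  have hthr : 4 * kl * m ^ 2 < 1 := by
    rw [lt_div_iff₀ (by positivity)] at hkl
    linarith
  nlinarith [sq_nonneg m]

variable {m km kl p : ℝ} (hm : 0 < m) (hkl : kl < 1 / (4 * m ^ 2)) (hp : 0 < p)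

include hm hkl hp

theorem totalCost_one_le (hp1 : p ≤ 1) : totalCost m km kl 1 ≤ totalCost m km kl p := by
  rw [← sub_nonneg, totalCost_sub_totalCost_one hm.ne' hp.ne']
  have := one_sub_mul_pos_of_lt_threshold hm hkl hp hp1
  exact div_nonneg (mul_nonneg (by linarith) this.le) (by positivity)

theorem totalCost_one_lt (hp1 : p < 1) : totalCost m km kl 1 < totalCost m km kl p := by
  rw [← sub_pos, totalCost_sub_totalCost_one hm.ne' hp.ne']
  have := one_sub_mul_pos_of_lt_threshold hm hkl hp hp1.le
  exact div_pos (mul_pos (by linarith) this) (by positivity)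

end TransmissionCost

theorem always_transmit_optimal_proportional_costs_general
    (m η km kl : ℝ) (hm : 0 < m) (hη : 0 < η)
    (hthr : km < 1 / (4 * η * m ^ 2)) (hkl : kl = η * km) :
    kl < 1 / (4 * m ^ 2) ∧
    ∀ p : ℝ, 0 < p → p ≤ 1 →
      ((2 * (1 : ℝ) + 1) / (4 * 1 * m) + (km + 1 * kl) * m ≤
        (2 * p + 1) / (4 * p * m) + (km + p * kl) * m) ∧
      (p < 1 →
        (2 * (1 : ℝ) + 1) / (4 * 1 * m) + (km + 1 * kl) * m <
          (2 * p + 1) / (4 * p * m) + (km + p * kl) * m) := by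
  have hbelow : kl < 1 / (4 * m ^ 2) := hkl ▸ TransmissionCost.mul_lt_threshold_of_lt hη hthr
  exact ⟨hbelow, fun p hp hp1 => ⟨TransmissionCost.totalCost_one_le hm hbelow hp hp1,
    fun hlt => TransmissionCost.totalCost_one_lt hm hbelow hp hlt⟩⟩

/-- With proportional costs `k_λ = η k_m` and `k_m < 1/(4 η m²)`, the
transmission cost is below the threshold `1/(4m²)`, and `p = 1` minimizes the
total cost `C(p) = (2p+1)/(4pm) + (k_m + p k_λ) m` over `p ∈ (0,1]`,
strictly so for `p < 1`. -/
theorem always_transmit_optimal_proportional_costs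
    (m η km kl : ℝ) (hm : 0 < m) (hη : 0 < η) (hkm : 0 < km)
    (hthr : km < 1 / (4 * η * m ^ 2)) (hkl : kl = η * km) :
    kl < 1 / (4 * m ^ 2) ∧
    ∀ p : ℝ, 0 < p → p ≤ 1 →
      ((2 * (1 : ℝ) + 1) / (4 * 1 * m) + (km + 1 * kl) * m ≤
        (2 * p + 1) / (4 * p * m) + (km + p * kl) * m) ∧
      (p < 1 →
        (2 * (1 : ℝ) + 1) / (4 * 1 * m) + (km + 1 * kl) * m <
          (2 * p + 1) / (4 * p * m) + (km + p * kl) * m) :=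
  always_transmit_optimal_proportional_costs_general m η km kl hm hη hthr hkl
end

section
/- Let d > 0, m₁ > 0, m₂ > 0 and 0 < p ≤ 1. Define N = p·m₁·m₂·(p·m₂ + 2d + m₁), τ_Θ = τ_F = τ_B = τ_Γ = (2pdm₂ + pm₁m₂ + dm₁ + m₁²)/N, τ_A = (2p²m₂² + 2pdm₂ + 2pm₁m₂ + dm₁)/N, and τ_Ψ = τ_E = (2p²m₂² + 2pdm₂ + dm₁ + m₁²)/N. Then these values satisfy the following system of reset-time equations: (i) τ_A = 2/(d+m₁) + (d/(d+m₁))·τ_E; (ii) τ_Γ = 1/(m₂+d+pm₁) + ((1−p)m₂/(m₂+d+pm₁))·τ_F + (d/(m₂+d+pm₁))·τ_E + (pm₁/(m₂+d+pm₁))·τ_B; (iii) τ_E = (pm₁/(m₁+m₂))·τ_B + ((1−p)m₁/(m₁+m₂))·τ_Γ + (pm₂/(m₁+m₂))·τ_A + ((1−p)m₂/(m₁+m₂))·τ_Ψ; (iv) τ_F = (pm₁/(pm₁+pm₂+2d))·τ_Θ + 1/(pm₁+pm₂+2d) + (d/(pm₁+pm₂+2d))·τ_Γ + (d/(pm₁+pm₂+2d))·τ_Ψ;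 (v) τ_B = 1/(m₂+d) + ((1−p)m₂/(m₂+d))·τ_Θ + (d/(m₂+d))·τ_E; (vi) τ_Θ = 1/(pm₂+2d) + (d/(pm₂+2d))·τ_B + (d/(pm₂+2d))·τ_Ψ. -/
/-!
The closed forms take only three distinct values: `u` (states Θ, F, B, Γ), `v` (states Ψ, E)
and `w` (state A). Once denominators are cleared, the six first-step equations collapse to three
linear balance equations
  `(p m₂ + d) u = 1 + d v`,  `(m₁ + p m₂) v = m₁ u + p m₂ w`,  `(d + m₁) w = 2 + d v`
(equations (ii), (iv), (v), (vi) all reduce to the first one), and the closed forms solve these.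
-/

theorem resetTimes_balance {d m₁ m₂ p N u v w : ℝ}
    (hN : N = p * m₁ * m₂ * (p * m₂ + 2 * d + m₁)) (hN0 : N ≠ 0)
    (hu : u = (2 * p * d * m₂ + p * m₁ * m₂ + d * m₁ + m₁ ^ 2) / N)
    (hv : v = (2 * p ^ 2 * m₂ ^ 2 + 2 * p * d * m₂ + d * m₁ + m₁ ^ 2) / N)
    (hw : w = (2 * p ^ 2 * m₂ ^ 2 + 2 * p * d * m₂ + 2 * p * m₁ * m₂ + d * m₁) / N) :
    (p * m₂ + d) * u = 1 + d * v ∧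
    (m₁ + p * m₂) * v = m₁ * u + p * m₂ * w ∧
    (d + m₁) * w = 2 + d * v := by
  subst hu hv hw
  refine ⟨?_, ?_, ?_⟩ <;> field_simp
  · linear_combination -hN
  · ring
  · linear_combination -2 * hN

theorem reset_times_satisfy_system_general
    (d m₁ m₂ p : ℝ) (hd : 0 < d) (hm₁ : 0 < m₁) (hm₂ : 0 < m₂)
    (hp0 : 0 < p)
    (N τΘ τF τB τΓ τA τΨ τE : ℝ)
    (hN : N = p * m₁ * m₂ * (p * m₂ + 2 * d + m₁))
    (hτΘ : τΘ = (2 * p * d * m₂ + p * m₁ * m₂ + d * m₁ + m₁ ^ 2) / N)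
    (hτF : τF = (2 * p * d * m₂ + p * m₁ * m₂ + d * m₁ + m₁ ^ 2) / N)
    (hτB : τB = (2 * p * d * m₂ + p * m₁ * m₂ + d * m₁ + m₁ ^ 2) / N)
    (hτΓ : τΓ = (2 * p * d * m₂ + p * m₁ * m₂ + d * m₁ + m₁ ^ 2) / N)
    (hτA : τA = (2 * p ^ 2 * m₂ ^ 2 + 2 * p * d * m₂ + 2 * p * m₁ * m₂ + d * m₁) / N)
    (hτΨ : τΨ = (2 * p ^ 2 * m₂ ^ 2 + 2 * p * d * m₂ + d * m₁ + m₁ ^ 2) / N)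
    (hτE : τE = (2 * p ^ 2 * m₂ ^ 2 + 2 * p * d * m₂ + d * m₁ + m₁ ^ 2) / N) :
    τA = 2 / (d + m₁) + (d / (d + m₁)) * τE ∧
    τΓ = 1 / (m₂ + d + p * m₁) + ((1 - p) * m₂ / (m₂ + d + p * m₁)) * τF +
      (d / (m₂ + d + p * m₁)) * τE + (p * m₁ / (m₂ + d + p * m₁)) * τB ∧
    τE = (p * m₁ / (m₁ + m₂)) * τB + ((1 - p) * m₁ / (m₁ + m₂)) * τΓ +
      (p * m₂ / (m₁ + m₂)) * τA + ((1 - p) * m₂ / (m₁ + m₂)) * τΨ ∧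
    τF = (p * m₁ / (p * m₁ + p * m₂ + 2 * d)) * τΘ + 1 / (p * m₁ + p * m₂ + 2 * d) +
      (d / (p * m₁ + p * m₂ + 2 * d)) * τΓ + (d / (p * m₁ + p * m₂ + 2 * d)) * τΨ ∧
    τB = 1 / (m₂ + d) + ((1 - p) * m₂ / (m₂ + d)) * τΘ + (d / (m₂ + d)) * τE ∧
    τΘ = 1 / (p * m₂ + 2 * d) + (d / (p * m₂ + 2 * d)) * τB +
      (d / (p * m₂ + 2 * d)) * τΨ := by
  have hN0 : N ≠ 0 := by rw [hN]; positivity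
  obtain ⟨hu, hv, hw⟩ := resetTimes_balance hN hN0 hτΓ hτE hτA
  rw [← hτΓ] at hτΘ hτF hτB
  rw [← hτE] at hτΨ
  subst hτΘ hτF hτB hτΨ
  have : d + m₁ ≠ 0 := by positivity
  have : m₂ + d + p * m₁ ≠ 0 := by positivity
  have : m₁ + m₂ ≠ 0 := by positivity
  have : p * m₁ + p * m₂ + 2 * d ≠ 0 := by positivity
  have : m₂ + d ≠ 0 := by positivity
  have : p * m₂ + 2 * d ≠ 0 := by positivity
  refine ⟨?_, ?_, ?_, ?_, ?_, ?_⟩ <;> field_simp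
  · linear_combination hw
  · linear_combination hu
  · linear_combination hv
  · linear_combination hu
  · linear_combination hu
  · linear_combination hu

/-- The closed-form reset times claimed in the paper satisfy the first-step
(conditional transition probability) system of equations for the expected
times to return to a fully correct knowledge state. -/
theorem reset_times_satisfy_system
    (d m₁ m₂ p : ℝ) (hd : 0 < d) (hm₁ : 0 < m₁) (hm₂ : 0 < m₂)
    (hp0 : 0 < p) (hp1 : p ≤ 1)
    (N τΘ τF τB τΓ τA τΨ τE : ℝ)
    (hN : N = p * m₁ * m₂ * (p * m₂ + 2 * d + m₁))
    (hτΘ : τΘ = (2 * p * d * m₂ + p * m₁ * m₂ + d * m₁ + m₁ ^ 2) / N)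
    (hτF : τF = (2 * p * d * m₂ + p * m₁ * m₂ + d * m₁ + m₁ ^ 2) / N)
    (hτB : τB = (2 * p * d * m₂ + p * m₁ * m₂ + d * m₁ + m₁ ^ 2) / N)
    (hτΓ : τΓ = (2 * p * d * m₂ + p * m₁ * m₂ + d * m₁ + m₁ ^ 2) / N)
    (hτA : τA = (2 * p ^ 2 * m₂ ^ 2 + 2 * p * d * m₂ + 2 * p * m₁ * m₂ + d * m₁) / N)
    (hτΨ : τΨ = (2 * p ^ 2 * m₂ ^ 2 + 2 * p * d * m₂ + d * m₁ + m₁ ^ 2) / N)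
    (hτE : τE = (2 * p ^ 2 * m₂ ^ 2 + 2 * p * d * m₂ + d * m₁ + m₁ ^ 2) / N) :
    τA = 2 / (d + m₁) + (d / (d + m₁)) * τE ∧
    τΓ = 1 / (m₂ + d + p * m₁) + ((1 - p) * m₂ / (m₂ + d + p * m₁)) * τF +
      (d / (m₂ + d + p * m₁)) * τE + (p * m₁ / (m₂ + d + p * m₁)) * τB ∧
    τE = (p * m₁ / (m₁ + m₂)) * τB + ((1 - p) * m₁ / (m₁ + m₂)) * τΓ +
      (p * m₂ / (m₁ + m₂)) * τA + ((1 - p) * m₂ / (m₁ + m₂)) * τΨ ∧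
    τF = (p * m₁ / (p * m₁ + p * m₂ + 2 * d)) * τΘ + 1 / (p * m₁ + p * m₂ + 2 * d) +
      (d / (p * m₁ + p * m₂ + 2 * d)) * τΓ + (d / (p * m₁ + p * m₂ + 2 * d)) * τΨ ∧
    τB = 1 / (m₂ + d) + ((1 - p) * m₂ / (m₂ + d)) * τΘ + (d / (m₂ + d)) * τE ∧
    τΘ = 1 / (p * m₂ + 2 * d) + (d / (p * m₂ + 2 * d)) * τB +
      (d / (p * m₂ + 2 * d)) * τΨ :=
  reset_times_satisfy_system_general d m₁ m₂ p hd hm₁ hm₂ hp0 N τΘ τF τB τΓ τA τΨ τE hN hτΘ hτF hτB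
    hτΓ hτA hτΨ hτE
end

section
/- Let m > 0 and 0 < p < 1, and let d₁ > 0 and d₂ > 0 be two drift rates. For a drift rate d > 0, define N(d) = p·m·m·(p·m + 2d + m), τ_A(d) = (2p²m² + 2pdm + 2pm² + dm)/N(d), τ_B(d) = τ_Γ(d) = (2pdm + pm² + dm + m²)/N(d), π_O(d) = m²(1−p)²p² / ((d + m(1−p)p)²), π_Φ(d) = d·m²(1−p)²p / ((d + m(1−p)p)²·(d + m − mp²)), P_O(d) = π_O(d)/(π_O(d)+π_Φ(d)), P_Φ(d) = π_Φ(d)/(π_O(d)+π_Φ(d)), and T(d) = P_O(d)·((1/2)τ_A(d) + (1/2)τ_B(d)) + P_Φ(d)·((1/2)τ_A(d) + (1/2)τ_Γ(d)). Then T(d₁) = T(d₂); the mean cycle time, and hence the long-term BAoII Δ = T/2, is independent of the drift rate d. -/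
/-!
Because the return times `τ_B` and `τ_Γ` from the two reset states coincide, the cycle time is
`(P_O + P_Φ) · (τ_A + τ_B) / 2 = (τ_A + τ_B) / 2`, whatever the stationary weights are. The numerators
of `τ_A` and `τ_B` add up to `(2p + 1) · m · (pm + 2d + m)`, so the factor `pm + 2d + m` of `N(d)`
cancels and `T(d) = (2p + 1) / (2pm)` for every drift rate `d > 0`.
-/

section

variable {m p d : ℝ}

lemma half_sum_return_times_eq (hm : m ≠ 0) (hp : p ≠ 0) (hN : p * m + 2 * d + m ≠ 0) :
    1 / 2 * ((2 * p ^ 2 * m ^ 2 + 2 * p * d * m + 2 * p * m ^ 2 + d * m) /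
        (p * m * m * (p * m + 2 * d + m))) +
      1 / 2 * ((2 * p * d * m + p * m ^ 2 + d * m + m ^ 2) / (p * m * m * (p * m + 2 * d + m))) =
    (2 * p + 1) / (2 * p * m) := by
  field_simp
  ring

lemma stationary_weights_sum_pos (hm : 0 < m) (hp0 : 0 < p) (hp1 : p < 1) (hd : 0 < d) :
    0 < m ^ 2 * (1 - p) ^ 2 * p ^ 2 / (d + m * (1 - p) * p) ^ 2 +
      d * m ^ 2 * (1 - p) ^ 2 * p / ((d + m * (1 - p) * p) ^ 2 * (d + m - m * p ^ 2)) := by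
  have h1p : 0 < 1 - p := sub_pos.mpr hp1
  have hmp : 0 < d + m - m * p ^ 2 := by
    have : 0 < m * (1 - p) * (1 + p) := by positivity
    linarith
  positivity

end

/-- The mean cycle time `T(d)` of the CTMC (and hence the long-term BAoII
`Δ = T/2`) is independent of the drift rate `d`: for any two drift rates
`d₁, d₂ > 0`, `T(d₁) = T(d₂)`. -/
theorem cycle_time_independent_of_drift
    (m p : ℝ) (hm : 0 < m) (hp0 : 0 < p) (hp1 : p < 1)
    (d₁ d₂ : ℝ) (hd₁ : 0 < d₁) (hd₂ : 0 < d₂)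
    (N τA τB τΓ πO πΦ PO PΦ T : ℝ → ℝ)
    (hN : ∀ d, N d = p * m * m * (p * m + 2 * d + m))
    (hτA : ∀ d, τA d =
      (2 * p ^ 2 * m ^ 2 + 2 * p * d * m + 2 * p * m ^ 2 + d * m) / N d)
    (hτB : ∀ d, τB d = (2 * p * d * m + p * m ^ 2 + d * m + m ^ 2) / N d)
    (hτΓ : ∀ d, τΓ d = (2 * p * d * m + p * m ^ 2 + d * m + m ^ 2) / N d)
    (hπO : ∀ d, πO d = m ^ 2 * (1 - p) ^ 2 * p ^ 2 / ((d + m * (1 - p) * p) ^ 2))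
    (hπΦ : ∀ d, πΦ d = d * m ^ 2 * (1 - p) ^ 2 * p /
      ((d + m * (1 - p) * p) ^ 2 * (d + m - m * p ^ 2)))
    (hPO : ∀ d, PO d = πO d / (πO d + πΦ d))
    (hPΦ : ∀ d, PΦ d = πΦ d / (πO d + πΦ d))
    (hT : ∀ d, T d = PO d * ((1 / 2) * τA d + (1 / 2) * τB d) +
      PΦ d * ((1 / 2) * τA d + (1 / 2) * τΓ d)) :
    T d₁ = T d₂ := by
  have cycle_time_eq : ∀ d, 0 < d → T d = (2 * p + 1) / (2 * p * m) := by
    intro d hd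
    have hπ : πO d + πΦ d ≠ 0 := by
      rw [hπO, hπΦ]
      exact (stationary_weights_sum_pos hm hp0 hp1 hd).ne'
    have hP : PO d + PΦ d = 1 := by rw [hPO, hPΦ, ← add_div, div_self hπ]
    have hNd : p * m + 2 * d + m ≠ 0 := by positivity
    calc T d = (PO d + PΦ d) * (1 / 2 * τA d + 1 / 2 * τB d) := by
          rw [hT, hτΓ, ← hτB]
          ring
      _ = (2 * p + 1) / (2 * p * m) := by
          rw [hP, one_mul, hτA, hτB, hN]
          exact half_sum_return_times_eq hm.ne' hp0.ne' hNd
  rw [cycle_time_eq d₁ hd₁, cycle_time_eq d₂ hd₂]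
end
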